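/- Assume n ≥ 1 and let ω = Σ_{i,j=1}^n A_{ij} ψ_j·φ_i in the exterior algebra Λ of R^{2n}. Then for every index k (1 ≤ k ≤ n), (ψ_k·φ_k)·ω^{n−1} = (n−1)! · det(A^{(k)}) · (ψ₁·φ₁·⋯·ψ_n·φ_n), where A^{(k)} is the (n−1)×(n−1) matrix obtained from A by deleting its k-th row and k-th column. (This is the fermionic-integral identity (A.32) of the paper, ∫ ψ⁺_k ψ⁻_k exp(Σ A_{ij} ψ⁺_j ψ⁻_i) dψ = det of the (k,k)-minor, used to obtain the principal-minor determinant in the Alexander polynomial formula.) -/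

import Mathlib

open ExteriorAlgebra

/-- The odd generator `ψᵢ` of the exterior algebra of `R^{2n} = (Fin n → R) × (Fin n → R)`:
the image of the `i`-th standard basis vector of the first factor. -/
noncomputable def fermionPsi {R : Type*} [CommRing R] {n : ℕ} (i : Fin n) :
    ExteriorAlgebra R ((Fin n → R) × (Fin n → R)) :=
  ExteriorAlgebra.ι R ((Pi.single i 1 : Fin n → R), 0)

/-- The odd generator `φᵢ` of the exterior algebra of `R^{2n} = (Fin n → R) × (Fin n → R)`:
the image of the `i`-th standard basis vector of the second factor. -/
noncomputable def fermionPhi {R : Type*} [CommRing R] {n : ℕ} (i : Fin n) :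
    ExteriorAlgebra R ((Fin n → R) × (Fin n → R)) :=
  ExteriorAlgebra.ι R (0, (Pi.single i 1 : Fin n → R))

/-!
Write `ω = ∑ᵢ bᵢ` with `bᵢ = (∑ⱼ Aᵢⱼ ψⱼ) φᵢ`. Products of two odd generators commute with each
other, and `bᵢ² = 0`, so `(∑_{i ∈ s} bᵢ) ^ #s = #s! ∏_{i ∈ s} bᵢ`. As `ψₖφₖ bₖ = 0` (it contains
`φₖ` twice), `ψₖφₖ ω ^ n = n! ψₖφₖ ∏_{i ≠ k} bᵢ`, and `ψₖφₖ` is the `k`-th factor `b'ₖ` built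
from the matrix `A'` whose `k`-th row is replaced by the unit vector `eₖ`. Moving all `ψ`'s to
the left, `∏ᵢ b'ᵢ` becomes an alternating function of the rows of `A'`, hence equals
`det A' · ∏ᵢ ψᵢφᵢ`; and `det A'` is the `(k, k)` cofactor of `A`, i.e. the principal minor.
-/

open Finset
open scoped Nat IsMulCommutative

theorem AlternatingMap.map_eq_det_smul_map_basis {R M N ι : Type*} [CommRing R] [AddCommGroup M]
    [Module R M] [AddCommGroup N] [Module R N] [Fintype ι] [DecidableEq ι]
    (f : M [⋀^ι]→ₗ[R] N) (e : Module.Basis ι R M) (v : ι → M) :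
    f v = e.det v • f e := by
  suffices f = e.det.smulRight (f e) from DFunLike.congr_fun this v
  refine e.ext_alternating fun i hi => ?_
  let σ : Equiv.Perm ι := Equiv.ofBijective i (Finite.injective_iff_bijective.1 hi)
  change f (e ∘ σ) = e.det (e ∘ σ) • f e
  rw [AlternatingMap.map_perm, AlternatingMap.map_perm, e.det_self, smul_one_smul]

section CommutingSquareZero

variable {A : Type*} [CommSemiring A]

theorem add_pow_succ_of_mul_self_eq_zero {a : A} (ha : a * a = 0) (b : A) (p : ℕ) :
    (a + b) ^ (p + 1) = b ^ (p + 1) + (p + 1) * a * b ^ p := by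
  induction p with
  | zero => simp [add_comm]
  | succ p ih =>
    calc (a + b) ^ (p + 2) = (b ^ (p + 1) + (p + 1) * a * b ^ p) * (a + b) := by rw [pow_succ, ih]
      _ = b ^ (p + 2) + (p + 2) * a * b ^ (p + 1) + (p + 1) * (a * a) * b ^ p := by ring
      _ = b ^ (p + 1 + 1) + (↑(p + 1) + 1) * a * b ^ (p + 1) := by rw [ha]; push_cast; ring

theorem Finset.sum_pow_card_of_mul_self_eq_zero {ι : Type*} [DecidableEq ι] {b : ι → A}
    (s : Finset ι) (hb : ∀ i ∈ s, b i * b i = 0) :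
    (∑ i ∈ s, b i) ^ #s = (#s)! * ∏ i ∈ s, b i := by
  induction s using Finset.induction_on with
  | empty => simp
  | insert a s has ih =>
    have hb' : ∀ i ∈ s, b i * b i = 0 := fun i hi => hb i (mem_insert_of_mem hi)
    -- each term of `(∑ b) * ∏ b` contains some `b i` twice
    have hvanish : (∑ i ∈ s, b i) ^ (#s + 1) = 0 := by
      rw [pow_succ', ih hb', sum_mul, sum_eq_zero]
      intro i hi
      rw [← mul_prod_erase s b hi, mul_left_comm, ← mul_assoc (b i), hb' i hi, zero_mul, mul_zero]
    rw [sum_insert has, card_insert_of_notMem has,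
      add_pow_succ_of_mul_self_eq_zero (hb a (mem_insert_self a s)), hvanish, ih hb',
      prod_insert has, Nat.factorial_succ]
    push_cast
    ring

theorem mul_add_pow_of_mul_eq_zero {c a : A} (h : c * a = 0) (b : A) (n : ℕ) :
    c * (a + b) ^ n = c * b ^ n := by
  induction n with
  | zero => simp
  | succ n ih =>
    calc c * (a + b) ^ (n + 1) = c * (a + b) ^ n * (a + b) := by rw [pow_succ, mul_assoc]
      _ = c * a * b ^ n + c * b ^ (n + 1) := by rw [ih]; ring
      _ = c * b ^ (n + 1) := by rw [h, zero_mul, zero_add]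

end CommutingSquareZero

theorem Matrix.det_updateRow_single_self {R : Type*} [CommRing R] {n : ℕ}
    (A : Matrix (Fin (n + 1)) (Fin (n + 1)) R) (k : Fin (n + 1)) :
    (A.updateRow k (Pi.single k 1)).det = (A.submatrix k.succAbove k.succAbove).det := by
  rw [← adjugate_apply, adjugate_fin_succ_eq_det_submatrix, Even.neg_one_pow ⟨k, rfl⟩, one_mul]

namespace ExteriorAlgebra

variable {R M : Type*} [CommRing R] [AddCommGroup M] [Module R M]

theorem ι_mul_ι_comm (x y : M) : ι R x * ι R y = -(ι R y * ι R x) :=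
  eq_neg_of_add_eq_zero_left (ι_add_mul_swap x y)

theorem commute_ι_mul_ι_ι (x y z : M) : Commute (ι R x * ι R y) (ι R z) := by
  change ι R x * ι R y * ι R z = ι R z * (ι R x * ι R y)
  rw [mul_assoc, ι_mul_ι_comm y z, mul_neg, ← mul_assoc, ι_mul_ι_comm x z, neg_mul, neg_neg,
    mul_assoc]

theorem ι_mul_ι_mul_ι_mul_ι_eq_zero (x y z : M) : ι R x * ι R y * (ι R z * ι R y) = 0 := by
  rw [ι_mul_ι_comm z y, mul_neg, ← mul_assoc, mul_assoc (ι R x), ι_sq_zero, mul_zero, zero_mul,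
    neg_zero]

variable (R M) in
def evenSubalgebra : Subalgebra R (ExteriorAlgebra R M) :=
  Algebra.adjoin R (Set.range fun p : M × M => ι R p.1 * ι R p.2)

instance : IsMulCommutative (evenSubalgebra R M) :=
  Algebra.isMulCommutative_adjoin R <| by
    rintro _ ⟨⟨x, y⟩, rfl⟩ _ ⟨⟨z, w⟩, rfl⟩
    exact ((commute_ι_mul_ι_ι (R := R) x y z).mul_right (commute_ι_mul_ι_ι x y w)).eq

theorem ι_mul_ι_mem_evenSubalgebra (x y : M) : ι R x * ι R y ∈ evenSubalgebra R M :=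
  Algebra.subset_adjoin ⟨(x, y), rfl⟩

theorem ιMulti_mul_ι {m : ℕ} (v : Fin m → M) (x : M) :
    ιMulti R m v * ι R x = (-1 : R) ^ m • (ι R x * ιMulti R m v) := by
  induction m with
  | zero => simp
  | succ m ih =>
    rw [ιMulti_succ_apply, mul_assoc, ih, mul_smul_comm, ← mul_assoc, ι_mul_ι_comm, neg_mul,
      smul_neg, ← neg_smul, pow_succ, mul_neg_one, mul_assoc]

theorem prod_ofFn_ι_mul_ι {m : ℕ} (u w : Fin m → M) :
    (List.ofFn fun i => ι R (u i) * ι R (w i)).prod =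
      (-1 : R) ^ m.choose 2 • (ιMulti R m u * ιMulti R m w) := by
  induction m with
  | zero => simp
  | succ m ih =>
    set U := ιMulti R m (Matrix.vecTail u)
    set W := ιMulti R m (Matrix.vecTail w)
    have hsign : (-1 : R) ^ (m + 1).choose 2 * (-1) ^ m = (-1) ^ m.choose 2 := by
      rw [Nat.choose_succ_succ, Nat.choose_one_right, pow_add, mul_comm, ← mul_assoc, ← pow_add,
        Even.neg_one_pow ⟨m, rfl⟩, one_mul]
    calc _ = ι R (u 0) * ι R (w 0) * ((-1 : R) ^ m.choose 2 • (U * W)) := by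
          rw [List.ofFn_succ, List.prod_cons, ih]; rfl
      _ = (-1 : R) ^ (m + 1).choose 2 • (ι R (u 0) * ((-1 : R) ^ m • (ι R (w 0) * U)) * W) := by
          simp only [mul_smul_comm, smul_mul_assoc, smul_smul, hsign, mul_assoc]
      _ = _ := by
          rw [ιMulti_succ_apply, ιMulti_succ_apply, ← ιMulti_mul_ι]
          simp only [mul_assoc]
          rfl

theorem prod_ofFn_ι_mul_ι_eq_det_smul {N : Type*} [AddCommGroup N] [Module R N] {m : ℕ}
    (f : N →ₗ[R] M) (e : Module.Basis (Fin m) R N) (v : Fin m → N) (w : Fin m → M) :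
    (List.ofFn fun i => ι R (f (v i)) * ι R (w i)).prod =
      e.det v • (List.ofFn fun i => ι R (f (e i)) * ι R (w i)).prod := by
  have h := ((ιMulti R m).compLinearMap f).map_eq_det_smul_map_basis e v
  simp only [AlternatingMap.compLinearMap_apply] at h
  rw [prod_ofFn_ι_mul_ι, prod_ofFn_ι_mul_ι, h, smul_mul_assoc, smul_comm]

end ExteriorAlgebra

section Fermion

variable {R : Type*} [CommRing R] {m : ℕ}

local notation "Λ" => ExteriorAlgebra R ((Fin m → R) × (Fin m → R))

noncomputable def rowPsiMulPhi (B : Matrix (Fin m) (Fin m) R) (i : Fin m) :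
    evenSubalgebra R ((Fin m → R) × (Fin m → R)) :=
  ⟨ι R (B i, 0) * fermionPhi i, ι_mul_ι_mem_evenSubalgebra _ _⟩

theorem sum_smul_fermionPsi (v : Fin m → R) : ∑ j, v j • fermionPsi (R := R) j = ι R (v, 0) := by
  simp only [fermionPsi, ← map_smul, ← map_sum]
  congr 1
  ext <;> simp [Prod.fst_sum, Prod.snd_sum, Pi.single_apply]

theorem coe_sum_rowPsiMulPhi (A : Matrix (Fin m) (Fin m) R) :
    (↑(∑ i, rowPsiMulPhi A i) : Λ) = ∑ i, ∑ j, A i j • (fermionPsi j * fermionPhi i) := by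
  simp only [AddSubmonoidClass.coe_finsetSum, rowPsiMulPhi, ← sum_smul_fermionPsi, sum_mul,
    smul_mul_assoc]

theorem rowPsiMulPhi_mul_rowPsiMulPhi_self (B C : Matrix (Fin m) (Fin m) R) (i : Fin m) :
    rowPsiMulPhi B i * rowPsiMulPhi C i = 0 :=
  Subtype.ext (ι_mul_ι_mul_ι_mul_ι_eq_zero _ _ _)

theorem coe_rowPsiMulPhi_updateRow_self (A : Matrix (Fin m) (Fin m) R) (k : Fin m) :
    (rowPsiMulPhi (A.updateRow k (Pi.single k 1)) k : Λ) = fermionPsi k * fermionPhi k := by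
  simp [rowPsiMulPhi, fermionPsi]

theorem coe_prod_rowPsiMulPhi (B : Matrix (Fin m) (Fin m) R) :
    (↑(∏ i, rowPsiMulPhi B i) : Λ) =
      B.det • ((List.finRange m).map fun i => fermionPsi (R := R) i * fermionPhi i).prod := by
  rw [Fin.prod_univ_def, SubmonoidClass.coe_list_prod, List.map_map, ← List.ofFn_eq_map,
    ← List.ofFn_eq_map]
  have h := prod_ofFn_ι_mul_ι_eq_det_smul (LinearMap.inl R (Fin m → R) (Fin m → R))
    (Pi.basisFun R (Fin m)) B fun i => (0, Pi.single i 1)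
  rwa [show (Pi.basisFun R (Fin m)).det B = B.det from Pi.basisFun_det_apply B,
    funext (Pi.basisFun_apply R (Fin m))] at h

theorem rowPsiMulPhi_updateRow_mul_sum_pow {n : ℕ} (A : Matrix (Fin (n + 1)) (Fin (n + 1)) R)
    (k : Fin (n + 1)) :
    rowPsiMulPhi (A.updateRow k (Pi.single k 1)) k * (∑ i, rowPsiMulPhi A i) ^ n =
      n ! * ∏ i, rowPsiMulPhi (A.updateRow k (Pi.single k 1)) i := by
  set A' := A.updateRow k (Pi.single k 1)
  have hrows (t : Fin n) : rowPsiMulPhi A' (k.succAbove t) = rowPsiMulPhi A (k.succAbove t) := by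
    simp only [rowPsiMulPhi, A', Matrix.updateRow_ne (Fin.succAbove_ne k t)]
  have hpow : (∑ t, rowPsiMulPhi A (k.succAbove t)) ^ n =
      n ! * ∏ t, rowPsiMulPhi A (k.succAbove t) := by
    simpa using univ.sum_pow_card_of_mul_self_eq_zero fun t _ =>
      rowPsiMulPhi_mul_rowPsiMulPhi_self A A (k.succAbove t)
  rw [Fin.sum_univ_succAbove _ k,
    mul_add_pow_of_mul_eq_zero (rowPsiMulPhi_mul_rowPsiMulPhi_self A' A k), hpow,
    Fin.prod_univ_succAbove _ k]
  simp only [hrows]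
  exact mul_left_comm _ _ _

end Fermion

/-- Fermionic integral with an insertion: with `ω = Σ_{i,j} A_{ij} ψ_j φ_i` in the exterior
algebra of `R^{2(n+1)}`, for any index `k` one has
`(ψ_k φ_k) ω^n = n! · det A^{(k)} · ψ₁φ₁⋯ψ_{n+1}φ_{n+1}`, where `A^{(k)}` is the matrix
obtained from `A` by deleting its `k`-th row and `k`-th column. -/
theorem psi_phi_mul_omega_pow_eq_minor_det_smul
    {R : Type*} [CommRing R] {n : ℕ} (A : Matrix (Fin (n + 1)) (Fin (n + 1)) R)
    (k : Fin (n + 1)) :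
    (fermionPsi (R := R) k * fermionPhi k) *
        (∑ i : Fin (n + 1), ∑ j : Fin (n + 1), A i j • (fermionPsi j * fermionPhi i)) ^ n =
      (Nat.factorial n : R) • (A.submatrix (Fin.succAbove k) (Fin.succAbove k)).det •
        ((List.finRange (n + 1)).map (fun i => fermionPsi (R := R) i * fermionPhi i)).prod := by
  have h := congrArg Subtype.val (rowPsiMulPhi_updateRow_mul_sum_pow A k)
  rw [Subalgebra.coe_mul, Subalgebra.coe_pow, coe_sum_rowPsiMulPhi,
    coe_rowPsiMulPhi_updateRow_self, Subalgebra.coe_mul, SubringClass.coe_natCast,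
    coe_prod_rowPsiMulPhi, Matrix.det_updateRow_single_self] at h
  rw [h, Nat.cast_smul_eq_nsmul, nsmul_eq_mul]
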